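/- arXiv:2507.01898 — 2 statements merged into one kernel-verified Lean document; each statement's English description precedes it below -/
import Mathlib

section
/- For every integer n ≥ 5 with n ≡ 2 (mod 3), the set of pseudo-Frobenius numbers of S(n) = ⟨f_n², f_{n+1}², f_{n+2}²⟩ is exactly the two-element set { (f_{n+1}/2 − 1)·f_{n+1}² + (f_{n+1}/2 − 1)·f_{n+2}² − f_n² , (f_{n+2} − 1)·f_{n+1}² + (f_{n−2}/2 − 1)·f_{n+2}² − f_n² }. -/
/-! Write `f_{n-2} = 2t` and `f_{n-1} = v`, so that the generators are `A = (2t+v)²`,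
`B = (2t+2v)²` and `C = (4t+3v)²`. They satisfy `(5t+4v)A = (t+v)B + tC`,
`(4t+3v)B = (4t+3v)A + vC` and `(t+v)C = (t+v)A + (3t+2v)B`, which reduce every element of
`S(n)` to a form `aA + bB + cC` with `(b, c)` in the L-shaped region
`{b < 4t+3v, c < t} ∪ {b < t+v, t ≤ c < t+v}`. The region has exactly `A` points and, `B` being a
unit mod `A`, meets every residue class mod `A`; so this form is unique and `{bB + cC}` is the
Apéry set of `S(n)` with respect to `A`. The pseudo-Frobenius numbers are `w - A` for the
maximal `w` in the Apéry set, here the two corners `(t+v-1, t+v-1)` and `(4t+3v-1, t-1)`. -/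

open Nat

/-- Membership of an integer in the numerical semigroup
`S(n) = ⟨fib n ^ 2, fib (n+1) ^ 2, fib (n+2) ^ 2⟩`. -/
def SZ (n : ℕ) : Set ℤ :=
  {x | ∃ a b c : ℕ, x = (a : ℤ) * (fib n : ℤ) ^ 2 + (b : ℤ) * (fib (n + 1) : ℤ) ^ 2 +
      (c : ℤ) * (fib (n + 2) : ℤ) ^ 2}

/-- `x` is a pseudo-Frobenius number of `S(n)`. -/
def IsPF (n : ℕ) (x : ℤ) : Prop :=
  x ∉ SZ n ∧ ∀ s ∈ SZ n, s ≠ 0 → x + s ∈ SZ n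

open Finset

def natSpan3 (A B C : ℤ) : Set ℤ :=
  {x | ∃ a b c : ℕ, x = a * A + b * B + c * C}

def IsPseudoFrobenius (S : Set ℤ) (x : ℤ) : Prop :=
  x ∉ S ∧ ∀ s ∈ S, s ≠ 0 → x + s ∈ S

section natSpan3

variable {A B C : ℤ}

lemma natSpan3_add_mem {x y : ℤ} (hx : x ∈ natSpan3 A B C) (hy : y ∈ natSpan3 A B C) :
    x + y ∈ natSpan3 A B C := by
  obtain ⟨a, b, c, rfl⟩ := hx
  obtain ⟨a', b', c', rfl⟩ := hy
  exact ⟨a + a', b + b', c + c', by push_cast; ring⟩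

/-- Every nonzero `s` in the span is a generator plus an element of the span. -/
lemma isPseudoFrobenius_natSpan3_iff (hA : A ≠ 0) (hB : B ≠ 0) (hC : C ≠ 0) {x : ℤ} :
    IsPseudoFrobenius (natSpan3 A B C) x ↔ x ∉ natSpan3 A B C ∧
      x + A ∈ natSpan3 A B C ∧ x + B ∈ natSpan3 A B C ∧ x + C ∈ natSpan3 A B C := by
  refine ⟨fun ⟨hx, hadd⟩ ↦ ⟨hx, hadd A ⟨1, 0, 0, by ring⟩ hA, hadd B ⟨0, 1, 0, by ring⟩ hB,
    hadd C ⟨0, 0, 1, by ring⟩ hC⟩, ?_⟩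
  rintro ⟨hx, hxA, hxB, hxC⟩
  refine ⟨hx, ?_⟩
  rintro _ ⟨a, b, c, rfl⟩ hs
  rcases a with _ | a
  · rcases b with _ | b
    · rcases c with _ | c
      · simp at hs
      · convert natSpan3_add_mem hxC ⟨0, 0, c, rfl⟩ using 1; push_cast; ring
    · convert natSpan3_add_mem hxB ⟨0, b, c, rfl⟩ using 1; push_cast; ring
  · convert natSpan3_add_mem hxA ⟨a, b, c, rfl⟩ using 1; push_cast; ring

end natSpan3

/-- Together with `IsCoprime A B`, this makes `{p.1 * B + p.2 * C | p ∈ L}` the Apéry set of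
`natSpan3 A B C` with respect to `A`. -/
structure IsAperyIndex (A B C : ℤ) (L : Finset (ℕ × ℕ)) : Prop where
  zero_mem : (0, 0) ∈ L
  card_eq : #L = A.natAbs
  exists_of_succ_fst_notMem : ∀ p ∈ L, (p.1 + 1, p.2) ∉ L →
    ∃ a : ℕ, 0 < a ∧ ∃ q ∈ L, (p.1 + 1 : ℤ) * B + p.2 * C = a * A + q.1 * B + q.2 * C
  exists_of_succ_snd_notMem : ∀ p ∈ L, (p.1, p.2 + 1) ∉ L →
    ∃ a : ℕ, 0 < a ∧ ∃ q ∈ L, (p.1 : ℤ) * B + (p.2 + 1) * C = a * A + q.1 * B + q.2 * C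

namespace IsAperyIndex

variable {A B C : ℤ} {L : Finset (ℕ × ℕ)} (h : IsAperyIndex A B C L)
include h

lemma ne_zero : A ≠ 0 :=
  Int.natAbs_pos.mp (h.card_eq ▸ card_pos.mpr ⟨_, h.zero_mem⟩)

lemma exists_repr (b c : ℕ) :
    ∃ a : ℕ, ∃ q ∈ L, (b : ℤ) * B + c * C = a * A + q.1 * B + q.2 * C := by
  induction c with
  | zero =>
    induction b with
    | zero => exact ⟨0, (0, 0), h.zero_mem, by simp⟩
    | succ b ih =>
      obtain ⟨a, q, hq, e⟩ := ih
      by_cases hq' : (q.1 + 1, q.2) ∈ L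
      · exact ⟨a, _, hq', by push_cast; linear_combination e⟩
      · obtain ⟨a', -, r, hr, e'⟩ := h.exists_of_succ_fst_notMem q hq hq'
        exact ⟨a + a', r, hr, by push_cast; linear_combination e + e'⟩
  | succ c ih =>
    obtain ⟨a, q, hq, e⟩ := ih
    by_cases hq' : (q.1, q.2 + 1) ∈ L
    · exact ⟨a, _, hq', by push_cast; linear_combination e⟩
    · obtain ⟨a', -, r, hr, e'⟩ := h.exists_of_succ_snd_notMem q hq hq'
      exact ⟨a + a', r, hr, by push_cast; linear_combination e + e'⟩

lemma exists_repr_of_mem {s : ℤ} (hs : s ∈ natSpan3 A B C) :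
    ∃ a : ℕ, ∃ q ∈ L, s = a * A + q.1 * B + q.2 * C := by
  obtain ⟨a, b, c, rfl⟩ := hs
  obtain ⟨a', q, hq, e⟩ := h.exists_repr b c
  exact ⟨a + a', q, hq, by push_cast; linear_combination e⟩

/-- As `B` is a unit mod `A`, every residue mod `A` is some `p.1 * B + p.2 * C` with `p ∈ L`;
since `#L = |A|`, the map `L → ZMod |A|` is then a bijection. -/
lemma eq_of_repr_eq (hAB : IsCoprime A B) {a a' : ℤ} {p q : ℕ × ℕ} (hp : p ∈ L) (hq : q ∈ L)
    (e : a * A + p.1 * B + p.2 * C = a' * A + q.1 * B + q.2 * C) : a = a' := by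
  have : NeZero A.natAbs := ⟨Int.natAbs_ne_zero.mpr h.ne_zero⟩
  have hA : (A : ZMod A.natAbs) = 0 :=
    (ZMod.intCast_zmod_eq_zero_iff_dvd _ _).mpr (Int.natAbs_dvd.mpr dvd_rfl)
  let f : ℕ × ℕ → ZMod A.natAbs := fun p ↦ p.1 * B + p.2 * C
  have hsurj : ∀ z, ∃ p ∈ L, f p = z := by
    intro z
    obtain ⟨u, w, huw⟩ := hAB
    have hwB : (w * B : ZMod A.natAbs) = 1 := by
      simpa [hA] using congrArg (Int.cast : ℤ → ZMod A.natAbs) huw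
    obtain ⟨a, r, hr, e⟩ := h.exists_repr (z * w).val 0
    refine ⟨r, hr, ?_⟩
    have e' := congrArg (Int.cast : ℤ → ZMod A.natAbs) e
    push_cast [hA, ZMod.natCast_zmod_val] at e'
    simp only [f]
    linear_combination -e' + z * hwB
  have hinj : Set.InjOn f L := by
    refine injOn_of_card_image_eq ?_
    rw [eq_univ_of_forall fun z ↦ mem_image.mpr (hsurj z), Finset.card_univ, ZMod.card, h.card_eq]
  have hpq : p = q := hinj hp hq <| by
    have e' := congrArg (Int.cast : ℤ → ZMod A.natAbs) e
    push_cast [hA] at e'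
    simpa [f] using e'
  subst hpq
  exact mul_right_cancel₀ h.ne_zero (by linarith)

lemma repr_notMem_of_neg (hAB : IsCoprime A B) {a : ℤ} {p : ℕ × ℕ} (ha : a < 0) (hp : p ∈ L) :
    a * A + p.1 * B + p.2 * C ∉ natSpan3 A B C := fun hs ↦ by
  obtain ⟨a', q, hq, e⟩ := h.exists_repr_of_mem hs
  have := h.eq_of_repr_eq hAB hp hq e
  omega

theorem isPseudoFrobenius_iff (hAB : IsCoprime A B) (hB : B ≠ 0) (hC : C ≠ 0) {x : ℤ} :
    IsPseudoFrobenius (natSpan3 A B C) x ↔ ∃ p ∈ L, (p.1 + 1, p.2) ∉ L ∧ (p.1, p.2 + 1) ∉ L ∧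
      x = p.1 * B + p.2 * C - A := by
  rw [isPseudoFrobenius_natSpan3_iff h.ne_zero hB hC]
  constructor
  · rintro ⟨hx, hxA, hxB, hxC⟩
    obtain ⟨a, p, hp, e⟩ := h.exists_repr_of_mem hxA
    obtain rfl : a = 0 := by
      by_contra ha
      exact hx ⟨a - 1, p.1, p.2, by push_cast [Nat.one_le_iff_ne_zero.mpr ha]; linear_combination e⟩
    have hx' : x = p.1 * B + p.2 * C - A := by linear_combination e
    refine ⟨p, hp, fun hp' ↦ ?_, fun hp' ↦ ?_, hx'⟩
    · obtain ⟨a', q, hq, e'⟩ := h.exists_repr_of_mem hxB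
      have := h.eq_of_repr_eq hAB (a := -1) (a' := a') hp' hq <| by
        push_cast; linear_combination e' - hx'
      omega
    · obtain ⟨a', q, hq, e'⟩ := h.exists_repr_of_mem hxC
      have := h.eq_of_repr_eq hAB (a := -1) (a' := a') hp' hq <| by
        push_cast; linear_combination e' - hx'
      omega
  · rintro ⟨p, hp, hpB, hpC, rfl⟩
    refine ⟨?_, ⟨0, p.1, p.2, by ring⟩, ?_, ?_⟩
    · exact fun hs ↦
        h.repr_notMem_of_neg hAB (a := -1) (by norm_num) hp (by convert hs using 1; ring)
    · obtain ⟨a, ha, q, hq, e⟩ := h.exists_of_succ_fst_notMem p hp hpB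
      exact ⟨a - 1, q.1, q.2, by push_cast [ha]; linear_combination e⟩
    · obtain ⟨a, ha, q, hq, e⟩ := h.exists_of_succ_snd_notMem p hp hpC
      exact ⟨a - 1, q.1, q.2, by push_cast [ha]; linear_combination e⟩

end IsAperyIndex

section FibonacciSquares

variable {t v : ℕ}

def aperyRegion (t v : ℕ) : Finset (ℕ × ℕ) :=
  range (4 * t + 3 * v) ×ˢ range t ∪ range (t + v) ×ˢ Ico t (t + v)

lemma mk_mem_aperyRegion {b c : ℕ} :
    (b, c) ∈ aperyRegion t v ↔ b < 4 * t + 3 * v ∧ c < t ∨ b < t + v ∧ t ≤ c ∧ c < t + v := by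
  simp [aperyRegion]

lemma card_aperyRegion : #(aperyRegion t v) = (2 * t + v) ^ 2 := by
  rw [aperyRegion, card_union_of_disjoint, card_product, card_product, card_range, card_range,
    card_range, Nat.card_Ico, Nat.add_sub_cancel_left]
  · ring
  · refine disjoint_left.mpr fun p hp hp' ↦ ?_
    simp only [mem_product, mem_range, mem_Ico] at hp hp'
    omega

theorem isAperyIndex_aperyRegion (ht : 0 < t) (htv : t ≤ v) :
    IsAperyIndex ((2 * t + v : ℤ) ^ 2) ((2 * t + 2 * v : ℤ) ^ 2) ((4 * t + 3 * v : ℤ) ^ 2)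
      (aperyRegion t v) where
  zero_mem := mk_mem_aperyRegion.mpr (by omega)
  card_eq := by rw [card_aperyRegion]; norm_cast
  exists_of_succ_fst_notMem := by
    rintro ⟨b, c⟩ hp hp'
    simp only [mk_mem_aperyRegion] at hp hp'
    rcases hp with ⟨hb, hc⟩ | ⟨hb, hc, hc'⟩
    · have hb₁ : (b : ℤ) + 1 = 4 * t + 3 * v := by omega
      refine ⟨4 * t + 3 * v, by omega, (0, c + v), mk_mem_aperyRegion.mpr (by omega), ?_⟩
      push_cast; rw [hb₁]; ring
    · obtain ⟨d, rfl⟩ : ∃ d, c = t + d := ⟨c - t, by omega⟩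
      have hb₁ : (b : ℤ) + 1 = t + v := by omega
      refine ⟨5 * t + 4 * v, by omega, (0, d), mk_mem_aperyRegion.mpr (by omega), ?_⟩
      push_cast; rw [hb₁]; ring
  exists_of_succ_snd_notMem := by
    rintro ⟨b, c⟩ hp hp'
    simp only [mk_mem_aperyRegion] at hp hp'
    rcases hp with ⟨hb, hc⟩ | ⟨hb, hc, hc'⟩
    · obtain ⟨d, rfl⟩ : ∃ d, b = t + v + d := ⟨b - (t + v), by omega⟩
      have hc₁ : (c : ℤ) + 1 = t := by omega
      refine ⟨5 * t + 4 * v, by omega, (d, 0), mk_mem_aperyRegion.mpr (by omega), ?_⟩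
      push_cast; rw [hc₁]; ring
    · have hc₁ : (c : ℤ) + 1 = t + v := by omega
      refine ⟨t + v, by omega, (b + 3 * t + 2 * v, 0), mk_mem_aperyRegion.mpr (by omega), ?_⟩
      push_cast; rw [hc₁]; ring

lemma maximal_aperyRegion_iff (ht : 0 < t) (htv : t ≤ v) {b c : ℕ} :
    (b, c) ∈ aperyRegion t v ∧ (b + 1, c) ∉ aperyRegion t v ∧ (b, c + 1) ∉ aperyRegion t v ↔
      b = t + v - 1 ∧ c = t + v - 1 ∨ b = 4 * t + 3 * v - 1 ∧ c = t - 1 := by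
  simp only [mk_mem_aperyRegion]
  constructor
  · intro h
    omega
  · rintro (⟨rfl, rfl⟩ | ⟨rfl, rfl⟩) <;> omega

theorem isPseudoFrobenius_natSpan3_sq_iff (ht : 0 < t) (htv : t ≤ v)
    (hco : IsCoprime (2 * t : ℤ) v) {x : ℤ} :
    IsPseudoFrobenius
        (natSpan3 ((2 * t + v : ℤ) ^ 2) ((2 * t + 2 * v : ℤ) ^ 2) ((4 * t + 3 * v : ℤ) ^ 2)) x ↔
      x = (t + v - 1) * (2 * t + 2 * v : ℤ) ^ 2 + (t + v - 1) * (4 * t + 3 * v : ℤ) ^ 2 -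
          (2 * t + v : ℤ) ^ 2 ∨
        x = (4 * t + 3 * v - 1) * (2 * t + 2 * v : ℤ) ^ 2 + (t - 1) * (4 * t + 3 * v : ℤ) ^ 2 -
          (2 * t + v : ℤ) ^ 2 := by
  have hAB : IsCoprime (2 * t + v : ℤ) (2 * t + 2 * v) := by
    obtain ⟨u, w, huw⟩ := hco
    exact ⟨2 * u - w, w - u, by linear_combination huw⟩
  have h1 : ((t + v - 1 : ℕ) : ℤ) = t + v - 1 := by omega
  have h2 : ((4 * t + 3 * v - 1 : ℕ) : ℤ) = 4 * t + 3 * v - 1 := by omega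
  have h3 : ((t - 1 : ℕ) : ℤ) = t - 1 := by omega
  rw [(isAperyIndex_aperyRegion ht htv).isPseudoFrobenius_iff hAB.pow (by positivity)
    (by positivity)]
  constructor
  · rintro ⟨⟨b, c⟩, hp, hpB, hpC, rfl⟩
    rcases (maximal_aperyRegion_iff ht htv).mp ⟨hp, hpB, hpC⟩ with ⟨rfl, rfl⟩ | ⟨rfl, rfl⟩
    · exact Or.inl (by rw [h1])
    · exact Or.inr (by rw [h2, h3])
  · rintro (rfl | rfl)
    · obtain ⟨hp, hpB, hpC⟩ := (maximal_aperyRegion_iff ht htv).mpr (Or.inl ⟨rfl, rfl⟩)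
      exact ⟨_, hp, hpB, hpC, by rw [h1]⟩
    · obtain ⟨hp, hpB, hpC⟩ := (maximal_aperyRegion_iff ht htv).mpr (Or.inr ⟨rfl, rfl⟩)
      exact ⟨_, hp, hpB, hpC, by rw [h2, h3]⟩

end FibonacciSquares

theorem pseudoFrobenius_Sn_of_mod_three_eq_two (n : ℕ) (hn : 5 ≤ n) (h3 : n % 3 = 2) :
    {x : ℤ | IsPF n x} =
      {((fib (n + 1) : ℤ) / 2 - 1) * (fib (n + 1) : ℤ) ^ 2 +
          ((fib (n + 1) : ℤ) / 2 - 1) * (fib (n + 2) : ℤ) ^ 2 - (fib n : ℤ) ^ 2,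
        ((fib (n + 2) : ℤ) - 1) * (fib (n + 1) : ℤ) ^ 2 +
          ((fib (n - 2) : ℤ) / 2 - 1) * (fib (n + 2) : ℤ) ^ 2 - (fib n : ℤ) ^ 2} := by
  obtain ⟨m, rfl⟩ : ∃ m, n = m + 2 := ⟨n - 2, by omega⟩
  have hfib3 : fib 3 = 2 := rfl
  obtain ⟨t, hm⟩ : 2 ∣ fib m := hfib3 ▸ fib_dvd 3 m (by omega)
  set v := fib (m + 1)
  have hf₀ : (fib (m + 2) : ℤ) = 2 * t + v := by rw [fib_add_two, hm]; push_cast; ring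
  have hf₁ : (fib (m + 2 + 1) : ℤ) = 2 * t + 2 * v := by
    rw [fib_add_two, Nat.cast_add, hf₀]; ring
  have hf₂ : (fib (m + 2 + 2) : ℤ) = 4 * t + 3 * v := by
    rw [fib_add_two, Nat.cast_add, hf₀, hf₁]; ring
  have ht : 0 < t := by have := fib_mono (show 3 ≤ m by omega); omega
  have htv : t ≤ v := by have := fib_le_fib_succ (n := m); omega
  have hco : IsCoprime (2 * t : ℤ) v := by
    exact_mod_cast Nat.isCoprime_iff_coprime.mpr (hm ▸ fib_coprime_fib_succ m)
  ext x
  change IsPseudoFrobenius (natSpan3 _ _ _) x ↔ _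
  rw [hf₀, hf₁, hf₂, isPseudoFrobenius_natSpan3_sq_iff ht htv hco, Nat.add_sub_cancel, hm]
  simp only [Set.mem_insert_iff, Set.mem_singleton_iff]
  rw [show (2 * t + 2 * v : ℤ) / 2 = t + v by omega, show ((2 * t : ℕ) : ℤ) / 2 = t by omega]
end

section
/- For every integer n ≥ 5 with n ≡ 2 (mod 3), the Apéry set Ap(S(n), f_n²) equals the set of all numbers λ·f_{n+1}² + μ·f_{n+2}² where (λ, μ) ranges over the pairs with 0 ≤ λ ≤ f_{n+2} − 1 and 0 ≤ μ ≤ f_{n+1}/2 − 1, excluding those pairs with both f_{n+1}/2 ≤ λ ≤ f_{n+2} − 1 and f_{n−2}/2 ≤ μ ≤ f_{n+1}/2 − 1. -/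
/-!
Write `a = fib n ^ 2`, `b = fib (n + 1) ^ 2`, `c = fib (n + 2) ^ 2` and put `N = fib (n + 2)`,
`B = fib (n - 1)`, `q = fib (n - 2) / 2`, `p = fib (n + 1) / 2 = q + B`. The Fibonacci recurrence
gives `a = N q + B p`, `b = (N + B) p`, `c = N ^ 2`, and from this parametrization alone:

* the relations `N b = N a + B c`, `p c = p a + (N - p) b` and `p b + q c = (N + p) a` show that
  an element `l b + m c` of the Apéry set has `(l, m)` in the L-shaped region `l < N`, `m < p`,
  `¬ (p ≤ l ∧ q ≤ m)`;
* conversely, the vectors `(N, -B)` and `(p, q)` span the lattice of `(U, V)` with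
  `a ∣ U b + V c`, and an inspection of its points shows that `l b + m c - a ∉ S` for `(l, m)` in
  the L-shape.
-/

open Nat

/-- The numerical semigroup `S(n) = ⟨fib n ^ 2, fib (n+1) ^ 2, fib (n+2) ^ 2⟩` as a set
of natural numbers. -/
def S (n : ℕ) : Set ℕ :=
  {x | ∃ a b c : ℕ, x = a * fib n ^ 2 + b * fib (n + 1) ^ 2 + c * fib (n + 2) ^ 2}

/-- The Apéry set of `m` in `S(n)`. -/
def Apery (n m : ℕ) : Set ℕ :=
  {s | s ∈ S n ∧ ¬∃ t ∈ S n, s = t + m}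

def semigroup3 (a b c : ℕ) : Set ℕ :=
  {x | ∃ i j k : ℕ, x = i * a + j * b + k * c}

def apery3 (a b c : ℕ) : Set ℕ :=
  {s | s ∈ semigroup3 a b c ∧ ¬∃ t ∈ semigroup3 a b c, s = t + a}

def lShape (b c N p q : ℕ) : Set ℕ :=
  {x | ∃ l m : ℕ, l < N ∧ m < p ∧ ¬(p ≤ l ∧ q ≤ m) ∧ x = l * b + m * c}

section Semigroup

variable {a b c : ℕ}

theorem mem_semigroup3 (i j k : ℕ) : i * a + j * b + k * c ∈ semigroup3 a b c :=
  ⟨i, j, k, rfl⟩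

theorem add_mem_semigroup3 {x y : ℕ} (hx : x ∈ semigroup3 a b c) (hy : y ∈ semigroup3 a b c) :
    x + y ∈ semigroup3 a b c := by
  obtain ⟨i, j, k, rfl⟩ := hx
  obtain ⟨i', j', k', rfl⟩ := hy
  exact ⟨i + i', j + j', k + k', by ring⟩

theorem exists_add_of_relation {i j k j₀ k₀ : ℕ}
    (hrel : ∃ t ∈ semigroup3 a b c, j₀ * b + k₀ * c = t + a) (hj : j₀ ≤ j) (hk : k₀ ≤ k) :
    ∃ t ∈ semigroup3 a b c, i * a + j * b + k * c = t + a := by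
  obtain ⟨t, ht, hrel⟩ := hrel
  obtain ⟨j, rfl⟩ := Nat.exists_eq_add_of_le hj
  obtain ⟨k, rfl⟩ := Nat.exists_eq_add_of_le hk
  exact ⟨t + (i * a + j * b + k * c), add_mem_semigroup3 ht (mem_semigroup3 i j k), by
    linear_combination hrel⟩

theorem apery3_subset_lShape {N p q : ℕ}
    (h₁ : ∃ t ∈ semigroup3 a b c, N * b + 0 * c = t + a)
    (h₂ : ∃ t ∈ semigroup3 a b c, 0 * b + p * c = t + a)
    (h₃ : ∃ t ∈ semigroup3 a b c, p * b + q * c = t + a) :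
    apery3 a b c ⊆ lShape b c N p q := by
  rintro x ⟨⟨i, j, k, rfl⟩, hx⟩
  obtain rfl : i = 0 := by
    by_contra hi
    obtain ⟨i, rfl⟩ := Nat.exists_eq_add_one_of_ne_zero hi
    exact hx ⟨i * a + j * b + k * c, mem_semigroup3 i j k, by ring⟩
  refine ⟨j, k, ?_, ?_, ?_, by ring⟩
  · by_contra! hj
    exact hx (exists_add_of_relation h₁ hj (Nat.zero_le k))
  · by_contra! hk
    exact hx (exists_add_of_relation h₂ (Nat.zero_le j) hk)
  · rintro ⟨hj, hk⟩
    exact hx (exists_add_of_relation h₃ hj hk)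

end Semigroup

section Lattice

variable {N B q p : ℤ}

theorem exists_lattice_coords {a b U V X : ℤ} (hp : p = q + B) (ha : a = N * q + B * p)
    (hb : b = (N + B) * p) (ha0 : a ≠ 0) (hab : IsCoprime a b) (haN : IsCoprime a (N ^ 2))
    (h : U * b + V * N ^ 2 = X * a) :
    ∃ s t : ℤ, U = s * N + t * p ∧ V = t * q - s * B ∧ X = U + t * N := by
  subst hp ha hb
  -- Cramer's rule: `s = (U q - V p) / a` and `t = (U B + V N) / a`, integral by coprimality.
  obtain ⟨s, hs⟩ : N * q + B * (q + B) ∣ U * q - V * (q + B) :=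
    hab.dvd_of_dvd_mul_right ⟨q * X - V * (N + (q + B)), by linear_combination q * h⟩
  obtain ⟨t, ht⟩ : N * q + B * (q + B) ∣ U * B + V * N :=
    haN.dvd_of_dvd_mul_right ⟨N * X - U * N, by linear_combination N * h⟩
  refine ⟨s, t, mul_left_cancel₀ ha0 ?_, mul_left_cancel₀ ha0 ?_, mul_left_cancel₀ ha0 ?_⟩
  · linear_combination N * hs + (q + B) * ht
  · linear_combination q * ht - B * hs
  · linear_combination -h + N * ht

theorem le_and_le_of_lattice_point_le {s t l μ : ℤ} (hN : 0 < N) (hB : 0 < B) (hq : 0 ≤ q)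
    (hp : p = q + B) (hl : s * N + t * p ≤ l) (hlN : l < N) (hμ : t * q - s * B ≤ μ)
    (hμp : μ < p) (hX : 0 < s * N + t * p + t * N) : p ≤ l ∧ q ≤ μ := by
  subst hp
  -- From `s N + t p ≤ l < N` and `0 < s N + t p + t N` we get `t ≥ 0`; `t = 0` is impossible,
  -- `t = 1` forces `s = 0`, and `t ≥ 2` forces `s ≤ 0`, even `s < 0` (so `μ ≥ p`) unless `p ≤ l`.
  have ht : 0 ≤ t := by nlinarith
  rcases (by omega : t = 0 ∨ t = 1 ∨ 2 ≤ t) with rfl | rfl | ht2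
  · have : 0 < s := by nlinarith
    have : s < 1 := by nlinarith
    omega
  · obtain rfl : s = 0 := by
      have : s < 1 := by nlinarith
      have : -1 < s := by nlinarith
      omega
    constructor <;> linarith
  · have hs : s ≤ 0 := by nlinarith
    have hqμ : q ≤ μ := by nlinarith
    refine ⟨?_, hqμ⟩
    by_contra! hlp
    have hs1 : s ≤ -1 := by nlinarith
    nlinarith

end Lattice

section Parametrized

variable {a b N B q p : ℕ}

theorem lShape_subset_apery3 (hN : 0 < N) (hB : 0 < B) (hp : p = q + B)
    (ha : a = N * q + B * p) (hb : b = (N + B) * p) (hab : Coprime a b) (haN : Coprime a (N ^ 2)) :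
    lShape b (N ^ 2) N p q ⊆ apery3 a b (N ^ 2) := by
  rintro x ⟨l, μ, hl, hμ, hlμ, rfl⟩
  refine ⟨⟨0, l, μ, by ring⟩, ?_⟩
  rintro ⟨_, ⟨i, j, k, rfl⟩, heq⟩
  have ha0 : 0 < a := by subst ha hp; positivity
  have heqZ : (l : ℤ) * b + μ * N ^ 2 = i * a + j * b + k * N ^ 2 + a := by exact_mod_cast heq
  obtain ⟨s, t, hU, hV, hX⟩ := exists_lattice_coords (N := N) (B := B) (q := q) (p := p)
    (a := a) (b := b) (U := l - j) (V := μ - k) (X := i + 1)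
    (by exact_mod_cast hp) (by exact_mod_cast ha) (by exact_mod_cast hb) (by positivity)
    (Nat.isCoprime_iff_coprime.mpr hab) (by exact_mod_cast Nat.isCoprime_iff_coprime.mpr haN)
    (by linear_combination heqZ)
  have := le_and_le_of_lattice_point_le (N := N) (B := B) (q := q) (p := p) (s := s) (t := t)
    (l := l) (μ := μ) (by exact_mod_cast hN) (by exact_mod_cast hB) (Int.natCast_nonneg q)
    (by exact_mod_cast hp) (by linarith) (by exact_mod_cast hl) (by linarith)
    (by exact_mod_cast hμ) (by linarith)
  exact hlμ (by exact_mod_cast this)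

theorem apery3_eq_lShape (hN : 0 < N) (hB : 0 < B) (hpN : p ≤ N)
    (hp : p = q + B) (ha : a = N * q + B * p) (hb : b = (N + B) * p) (hab : Coprime a b)
    (haN : Coprime a (N ^ 2)) :
    apery3 a b (N ^ 2) = lShape b (N ^ 2) N p q := by
  refine (apery3_subset_lShape ?_ ?_ ?_).antisymm (lShape_subset_apery3 hN hB hp ha hb hab haN)
  all_goals have hpZ : (p : ℤ) = q + B := by exact_mod_cast hp
  all_goals subst ha hb
  · refine ⟨(N - 1) * (N * q + B * p) + 0 * ((N + B) * p) + B * N ^ 2, mem_semigroup3 _ _ _, ?_⟩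
    zify [hN]
    linear_combination N ^ 2 * hpZ
  · refine ⟨(p - 1) * (N * q + B * p) + (N - p) * ((N + B) * p) + 0 * N ^ 2,
      mem_semigroup3 _ _ _, ?_⟩
    zify [hpN, show 1 ≤ p by omega]
    linear_combination p * N * hpZ
  · refine ⟨(N + p - 1) * (N * q + B * p) + 0 * ((N + B) * p) + 0 * N ^ 2,
      mem_semigroup3 _ _ _, ?_⟩
    zify [show 1 ≤ N + p by omega]
    linear_combination N * p * hpZ

end Parametrized

section Fibonacci

theorem two_dvd_fib_of_three_dvd {k : ℕ} (hk : 3 ∣ k) : 2 ∣ fib k :=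
  fib_dvd 3 k hk

theorem fib_coprime_fib_add_two (k : ℕ) : Coprime (fib k) (fib (k + 2)) := by
  rw [fib_add_two]
  exact coprime_self_add_right.mpr (fib_coprime_fib_succ k)

theorem fib_add_three (k : ℕ) : fib (k + 3) = fib k + 2 * fib (k + 1) := by
  rw [fib_add_two, fib_add_two]
  ring

theorem fib_add_three_div_two (k : ℕ) : fib (k + 3) / 2 = fib k / 2 + fib (k + 1) := by
  rw [fib_add_three]
  omega

variable {k : ℕ}

theorem sq_fib_add_two_eq (hk : 2 ∣ fib k) :
    fib (k + 2) ^ 2 = fib (k + 4) * (fib k / 2) + fib (k + 1) * (fib (k + 3) / 2) := by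
  obtain ⟨q, hq⟩ := hk
  have h4 : fib (k + 4) = fib (k + 2) + fib (k + 3) := fib_add_two
  rw [fib_add_three_div_two, h4, fib_add_three, fib_add_two, hq, Nat.mul_div_cancel_left q two_pos]
  ring

theorem sq_fib_add_three_eq (hk : 2 ∣ fib k) :
    fib (k + 3) ^ 2 = (fib (k + 4) + fib (k + 1)) * (fib (k + 3) / 2) := by
  obtain ⟨q, hq⟩ := hk
  have h4 : fib (k + 4) = fib (k + 2) + fib (k + 3) := fib_add_two
  rw [fib_add_three_div_two, h4, fib_add_three, fib_add_two, hq, Nat.mul_div_cancel_left q two_pos]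
  ring

end Fibonacci

theorem apery_Sn_of_mod_three_eq_two_general (n : ℕ) (h3 : n % 3 = 2) :
    Apery n (fib n ^ 2) =
      {x | ∃ l m : ℕ, l < fib (n + 2) ∧ m < fib (n + 1) / 2 ∧
        ¬(fib (n + 1) / 2 ≤ l ∧ fib (n - 2) / 2 ≤ m) ∧
        x = l * fib (n + 1) ^ 2 + m * fib (n + 2) ^ 2} := by
  obtain ⟨k, rfl⟩ : ∃ k, n = k + 2 := ⟨n - 2, by omega⟩
  have hk : 2 ∣ fib k := two_dvd_fib_of_three_dvd (by omega)
  show apery3 (fib (k + 2) ^ 2) (fib (k + 3) ^ 2) (fib (k + 4) ^ 2) =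
    lShape (fib (k + 3) ^ 2) (fib (k + 4) ^ 2) (fib (k + 4)) (fib (k + 3) / 2) (fib k / 2)
  exact apery3_eq_lShape (B := fib (k + 1)) (fib_pos.2 (by omega)) (fib_pos.2 (by omega))
    ((Nat.div_le_self _ _).trans (fib_mono (by omega))) (fib_add_three_div_two k)
    (sq_fib_add_two_eq hk) (sq_fib_add_three_eq hk)
    ((fib_coprime_fib_succ _).pow 2 2) ((fib_coprime_fib_add_two _).pow 2 2)

theorem apery_Sn_of_mod_three_eq_two (n : ℕ) (hn : 5 ≤ n) (h3 : n % 3 = 2) :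
    Apery n (fib n ^ 2) =
      {x | ∃ l m : ℕ, l < fib (n + 2) ∧ m < fib (n + 1) / 2 ∧
        ¬(fib (n + 1) / 2 ≤ l ∧ fib (n - 2) / 2 ≤ m) ∧
        x = l * fib (n + 1) ^ 2 + m * fib (n + 2) ^ 2} :=
  apery_Sn_of_mod_three_eq_two_general n h3
end
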